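/- arXiv:2408.14433 — 6 statements merged into one kernel-verified Lean document; each statement's English description precedes it below -/
import Mathlib

section
/- Let X be a real Hausdorff locally convex topological vector space, let f : X → ℝ be a continuous convex function, let Ω ⊆ X be a convex set, and let x̄ ∈ Ω. Then x̄ is a global minimizer of f over Ω (i.e., f(x̄) ≤ f(x) for all x ∈ Ω) if and only if there exists a continuous linear functional x* on X such that x* is a subgradient of f at x̄ and −x* belongs to the normal cone N(x̄; Ω), i.e., 0 ∈ ∂f(x̄) + N(x̄; Ω). -/
/-!
If `xbar` minimizes `f` over `Ω`, the open convex strict epigraph `{(x, t) | f x < t}` is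
disjoint from the convex set `Ω × (-∞, f xbar]`, so Hahn–Banach gives a continuous linear
functional `(x, t) ↦ g x + t * a` separating them. Testing the separation at `(xbar, f xbar + 1)`
forces `a < 0`, so the hyperplane is not vertical, and `x* = (-a)⁻¹ • g` is then a subgradient of
`f` at `xbar` with `-x*` normal to `Ω`. The converse is immediate: add the two inequalities.
-/

section

open Set

variable {X : Type*} [AddCommGroup X] [Module ℝ X] [TopologicalSpace X]

lemma ContinuousLinearMap.apply_prod_eq_comp_inl_add (φ : X × ℝ →L[ℝ] ℝ) (x : X) (t : ℝ) :
    φ (x, t) = φ.comp (.inl ℝ X ℝ) x + t * φ (0, 1) := by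
  rw [← φ.comp_inl_add_comp_inr (x, t)]
  simpa using φ.map_smul t (0, 1)

lemma exists_separation_strictEpigraph_of_le_on [IsTopologicalAddGroup X] [ContinuousSMul ℝ X]
    {f : X → ℝ} (hf_cont : Continuous f) (hf_conv : ConvexOn ℝ univ f) {Ω : Set X}
    (hΩ : Convex ℝ Ω) {c : ℝ} (hc : ∀ x ∈ Ω, c ≤ f x) :
    ∃ (g : X →L[ℝ] ℝ) (a u : ℝ),
      (∀ x t, f x < t → g x + t * a < u) ∧ ∀ y ∈ Ω, ∀ t ≤ c, u ≤ g y + t * a := by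
  have hopen : IsOpen {p : X × ℝ | f p.1 < p.2} :=
    isOpen_lt (hf_cont.comp continuous_fst) continuous_snd
  have hconv : Convex ℝ {p : X × ℝ | f p.1 < p.2} := by
    simpa using hf_conv.convex_strict_epigraph
  have hdisj : Disjoint {p : X × ℝ | f p.1 < p.2} (Ω ×ˢ Iic c) := by
    rw [disjoint_left]
    rintro ⟨x, t⟩ hlt ⟨hx, htc⟩
    exact (hlt.trans_le htc).not_ge (hc x hx)
  obtain ⟨φ, u, hlt, hle⟩ := geometric_hahn_banach_open hconv hopen (hΩ.prod (convex_Iic c)) hdisj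
  refine ⟨φ.comp (.inl ℝ X ℝ), φ (0, 1), u, fun x t hxt => ?_, fun y hy t ht => ?_⟩
  · rw [← φ.apply_prod_eq_comp_inl_add]
    exact hlt (x, t) hxt
  · rw [← φ.apply_prod_eq_comp_inl_add]
    exact hle (y, t) ⟨hy, ht⟩

lemma exists_subgradient_neg_mem_normal_of_separation {f : X → ℝ} {Ω : Set X} {xbar : X}
    (hxbar : xbar ∈ Ω) {g : X →L[ℝ] ℝ} {a u : ℝ} (hlt : ∀ x t, f x < t → g x + t * a < u)
    (hle : ∀ y ∈ Ω, ∀ t ≤ f xbar, u ≤ g y + t * a) :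
    ∃ xs : X →L[ℝ] ℝ,
      (∀ x : X, xs (x - xbar) ≤ f x - f xbar) ∧ (∀ x ∈ Ω, (-xs) (x - xbar) ≤ 0) := by
  have hbar : u ≤ g xbar + f xbar * a := hle xbar hxbar _ le_rfl
  have ha : a < 0 := by
    linarith [hlt xbar (f xbar + 1) (lt_add_one _)]
  -- The strict inequality on the open epigraph passes to its boundary point `(x, f x)`.
  have hgraph (x : X) : g x + f x * a ≤ u := by
    have hcont : Continuous fun t : ℝ => g x + t * a := by fun_prop
    refine le_of_tendsto ((hcont.tendsto (f x)).mono_left (nhdsWithin_le_nhds (s := Ioi (f x)))) ?_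
    filter_upwards [self_mem_nhdsWithin] with t ht using (hlt x t ht).le
  refine ⟨(-a)⁻¹ • g, fun x => ?_, fun y hy => ?_⟩
  · rw [smul_apply, smul_eq_mul, map_sub, inv_mul_le_iff₀ (neg_pos.2 ha)]
    linarith [hgraph x]
  · rw [neg_apply, smul_apply, smul_eq_mul, map_sub, neg_nonpos]
    have hgy : g xbar ≤ g y := by linarith [hgraph xbar, hle y hy (f xbar) le_rfl]
    exact mul_nonneg (inv_nonneg.2 (neg_nonneg.2 ha.le)) (sub_nonneg.2 hgy)

end

theorem optimality_condition_convex_problem_general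
    {X : Type*} [AddCommGroup X] [Module ℝ X] [TopologicalSpace X]
    [IsTopologicalAddGroup X] [ContinuousSMul ℝ X]
    (f : X → ℝ) (hf_cont : Continuous f) (hf_conv : ConvexOn ℝ Set.univ f)
    (Ω : Set X) (hΩ : Convex ℝ Ω) (xbar : X) (hxbar : xbar ∈ Ω) :
    (∀ x ∈ Ω, f xbar ≤ f x) ↔
      ∃ xs : X →L[ℝ] ℝ,
        (∀ x : X, xs (x - xbar) ≤ f x - f xbar) ∧ (∀ x ∈ Ω, (-xs) (x - xbar) ≤ 0) := by
  constructor
  · intro hmin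
    obtain ⟨g, a, u, hlt, hle⟩ := exists_separation_strictEpigraph_of_le_on hf_cont hf_conv hΩ hmin
    exact exists_subgradient_neg_mem_normal_of_separation hxbar hlt hle
  · rintro ⟨xs, hsub, hnormal⟩ x hx
    have hnormal_x := hnormal x hx
    rw [neg_apply, neg_nonpos] at hnormal_x
    linarith [hsub x]

/-- Characterization of optimal solutions to convex constrained minimization problems
in a real Hausdorff locally convex topological vector space: `xbar ∈ Ω` minimizes the
continuous convex function `f` over the convex set `Ω` iff `0 ∈ ∂f(xbar) + N(xbar; Ω)`,
i.e. there is a continuous linear functional `x*` that is a subgradient of `f` at `xbar`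
with `-x* ∈ N(xbar; Ω)`. -/
theorem optimality_condition_convex_problem
    {X : Type*} [AddCommGroup X] [Module ℝ X] [TopologicalSpace X]
    [IsTopologicalAddGroup X] [ContinuousSMul ℝ X] [LocallyConvexSpace ℝ X] [T2Space X]
    (f : X → ℝ) (hf_cont : Continuous f) (hf_conv : ConvexOn ℝ Set.univ f)
    (Ω : Set X) (hΩ : Convex ℝ Ω) (xbar : X) (hxbar : xbar ∈ Ω) :
    (∀ x ∈ Ω, f xbar ≤ f x) ↔
      ∃ xs : X →L[ℝ] ℝ,
        (∀ x : X, xs (x - xbar) ≤ f x - f xbar) ∧ (∀ x ∈ Ω, (-xs) (x - xbar) ≤ 0) :=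
  optimality_condition_convex_problem_general f hf_cont hf_conv Ω hΩ xbar hxbar
end

section
/- Let H₁, H₂ be real Hilbert spaces, let Ω₁ ⊆ H₁ and Ω₂ ⊆ H₂ be nonempty compact convex sets, let A : H₂ → H₁ and B : H₁ → H₂ be continuous linear operators, and set u₁(p, q) := ⟨p, Aq⟩, u₂(p, q) := ⟨q, Bp⟩. Then a pair (p̄, q̄) ∈ Ω₁ × Ω₂ is a Nash equilibrium for (u₁, u₂) if and only if (p̄, q̄) is the metric projection of (p̄ + Aq̄, q̄ + Bp̄) onto Ω₁ × Ω₂, i.e., ‖(Aq̄, Bp̄)‖ ≤ ‖(p̄ + Aq̄, q̄ + Bp̄) − (p, q)‖ for all (p, q) ∈ Ω₁ × Ω₂. -/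
open RealInnerProductSpace

theorem var_ineq_aux {H : Type*} [NormedAddCommGroup H] [InnerProductSpace ℝ H]
    {Ω : Set H} (hcv : Convex ℝ Ω) {pbar : H} (hpbar : pbar ∈ Ω) (a : H)
    (h : ∀ p ∈ Ω, 0 ≤ ‖p - pbar‖^2 - 2 * ⟪a, p - pbar⟫) :
    ∀ p ∈ Ω, ⟪a, p - pbar⟫ ≤ 0 := by
  intro p hp
  by_contra hd
  push_neg at hd
  set d := ⟪a, p - pbar⟫ with hdd
  set c := ‖p - pbar‖^2 with hc
  have hc0 : 0 < c := by
    rcases eq_or_lt_of_le (sq_nonneg ‖p - pbar‖) with h0 | h0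
    · exfalso
      have : p - pbar = 0 := by
        have := h0.symm
        rw [pow_eq_zero_iff (by norm_num)] at this
        exact norm_eq_zero.mp this
      rw [hdd, this, inner_zero_right] at hd
      linarith
    · exact h0
  set t := min 1 (d / c) with ht
  have ht0 : 0 < t := lt_min one_pos (div_pos hd hc0)
  have ht1 : t ≤ 1 := min_le_left _ _
  have htd : t * c ≤ d := by
    calc t * c ≤ (d / c) * c := by
          apply mul_le_mul_of_nonneg_right (min_le_right _ _) hc0.le
      _ = d := div_mul_cancel₀ d hc0.ne'
  have hmem : (1 - t) • pbar + t • p ∈ Ω :=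
    hcv hpbar hp (by linarith) ht0.le (by ring)
  have hkey := h _ hmem
  have heq : (1 - t) • pbar + t • p - pbar = t • (p - pbar) := by
    module
  rw [heq, norm_smul, real_inner_smul_right, mul_pow] at hkey
  simp only [Real.norm_eq_abs, sq_abs] at hkey
  nlinarith [hkey, mul_pos ht0 hd, mul_le_mul_of_nonneg_left htd ht0.le]

/-- In Hilbert spaces, a pair `(pbar, qbar) ∈ Ω₁ × Ω₂` is a Nash equilibrium of the
bilinear game `u₁(p,q) = ⟪p, Aq⟫`, `u₂(p,q) = ⟪q, Bp⟫` if and only if `(pbar, qbar)` is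
the metric projection of `(pbar + A qbar, qbar + B pbar)` onto `Ω₁ × Ω₂`, where the
product carries the Hilbert (ℓ²) norm `‖(a,b)‖² = ‖a‖² + ‖b‖²`. -/
theorem nash_equilibrium_iff_projection_hilbert
    {H₁ H₂ : Type*} [NormedAddCommGroup H₁] [InnerProductSpace ℝ H₁] [CompleteSpace H₁]
    [NormedAddCommGroup H₂] [InnerProductSpace ℝ H₂] [CompleteSpace H₂]
    (Ω₁ : Set H₁) (Ω₂ : Set H₂)
    (hne₁ : Ω₁.Nonempty) (hcp₁ : IsCompact Ω₁) (hcv₁ : Convex ℝ Ω₁)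
    (hne₂ : Ω₂.Nonempty) (hcp₂ : IsCompact Ω₂) (hcv₂ : Convex ℝ Ω₂)
    (A : H₂ →L[ℝ] H₁) (B : H₁ →L[ℝ] H₂)
    (u₁ : H₁ → H₂ → ℝ) (u₂ : H₁ → H₂ → ℝ)
    (hu₁ : ∀ p q, u₁ p q = ⟪p, A q⟫) (hu₂ : ∀ p q, u₂ p q = ⟪q, B p⟫)
    (pbar : H₁) (qbar : H₂) (hpbar : pbar ∈ Ω₁) (hqbar : qbar ∈ Ω₂) :
    ((∀ p ∈ Ω₁, u₁ p qbar ≤ u₁ pbar qbar) ∧ (∀ q ∈ Ω₂, u₂ pbar q ≤ u₂ pbar qbar)) ↔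
      ∀ p ∈ Ω₁, ∀ q ∈ Ω₂,
        ‖(WithLp.equiv 2 (H₁ × H₂)).symm (A qbar, B pbar)‖ ≤
          ‖(WithLp.equiv 2 (H₁ × H₂)).symm (pbar + A qbar - p, qbar + B pbar - q)‖ := by
  set a := A qbar with ha
  set b := B pbar with hb
  -- rewrite the norm inequality as a quadratic inequality
  have hquad : ∀ p q, (‖(WithLp.equiv 2 (H₁ × H₂)).symm (a, b)‖ ≤
      ‖(WithLp.equiv 2 (H₁ × H₂)).symm (pbar + a - p, qbar + b - q)‖) ↔
      0 ≤ (‖p - pbar‖^2 - 2 * ⟪a, p - pbar⟫) + (‖q - qbar‖^2 - 2 * ⟪b, q - qbar⟫) := by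
    intro p q
    have h1 : ‖(WithLp.equiv 2 (H₁ × H₂)).symm (a, b)‖^2 = ‖a‖^2 + ‖b‖^2 := by
      rw [WithLp.prod_norm_sq_eq_of_L2]; rfl
    have h2 : ‖(WithLp.equiv 2 (H₁ × H₂)).symm (pbar + a - p, qbar + b - q)‖^2
        = ‖pbar + a - p‖^2 + ‖qbar + b - q‖^2 := by
      rw [WithLp.prod_norm_sq_eq_of_L2]; rfl
    have e1 : pbar + a - p = a - (p - pbar) := by abel
    have e2 : qbar + b - q = b - (q - qbar) := by abel
    have n1 : ‖pbar + a - p‖^2 = ‖a‖^2 - 2 * ⟪a, p - pbar⟫ + ‖p - pbar‖^2 := by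
      rw [e1, norm_sub_sq_real]
    have n2 : ‖qbar + b - q‖^2 = ‖b‖^2 - 2 * ⟪b, q - qbar⟫ + ‖q - qbar‖^2 := by
      rw [e2, norm_sub_sq_real]
    constructor
    · intro h
      have := pow_le_pow_left₀ (norm_nonneg _) h 2
      rw [h1, h2, n1, n2] at this
      linarith
    · intro h
      have hsq : ‖(WithLp.equiv 2 (H₁ × H₂)).symm (a, b)‖^2 ≤
          ‖(WithLp.equiv 2 (H₁ × H₂)).symm (pbar + a - p, qbar + b - q)‖^2 := by
        rw [h1, h2, n1, n2]; linarith
      exact le_of_pow_le_pow_left₀ (by norm_num) (norm_nonneg _) hsq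
  -- rewrite the Nash conditions
  have key1 : ∀ p : H₁, ⟪a, p - pbar⟫ = ⟪p, A qbar⟫ - ⟪pbar, A qbar⟫ := by
    intro p
    rw [inner_sub_right, real_inner_comm a p, real_inner_comm a pbar, ha]
  have key2 : ∀ q : H₂, ⟪b, q - qbar⟫ = ⟪q, B pbar⟫ - ⟪qbar, B pbar⟫ := by
    intro q
    rw [inner_sub_right, real_inner_comm b q, real_inner_comm b qbar, hb]
  have hn1 : (∀ p ∈ Ω₁, u₁ p qbar ≤ u₁ pbar qbar) ↔ ∀ p ∈ Ω₁, ⟪a, p - pbar⟫ ≤ 0 := by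
    constructor <;> intro h p hp <;> have hh := h p hp
    · rw [hu₁, hu₁] at hh
      rw [key1 p]; linarith
    · rw [hu₁, hu₁]
      rw [key1 p] at hh; linarith
  have hn2 : (∀ q ∈ Ω₂, u₂ pbar q ≤ u₂ pbar qbar) ↔ ∀ q ∈ Ω₂, ⟪b, q - qbar⟫ ≤ 0 := by
    constructor <;> intro h q hq <;> have hh := h q hq
    · rw [hu₂, hu₂] at hh
      rw [key2 q]; linarith
    · rw [hu₂, hu₂]
      rw [key2 q] at hh; linarith
  rw [hn1, hn2]
  constructor
  · rintro ⟨h1, h2⟩ p hp q hq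
    rw [hquad]
    have := h1 p hp
    have := h2 q hq
    nlinarith [sq_nonneg ‖p - pbar‖, sq_nonneg ‖q - qbar‖]
  · intro h
    have h1 : ∀ p ∈ Ω₁, 0 ≤ ‖p - pbar‖^2 - 2 * ⟪a, p - pbar⟫ := by
      intro p hp
      have := (hquad p qbar).mp (h p hp qbar hqbar)
      simp only [sub_self, norm_zero, inner_zero_right] at this
      linarith
    have h2 : ∀ q ∈ Ω₂, 0 ≤ ‖q - qbar‖^2 - 2 * ⟪b, q - qbar⟫ := by
      intro q hq
      have := (hquad pbar q).mp (h pbar hpbar q hq)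
      simp only [sub_self, norm_zero, inner_zero_right] at this
      linarith
    exact ⟨var_ineq_aux hcv₁ hpbar a h1, var_ineq_aux hcv₂ hqbar b h2⟩
end

section
/- Let X₁ and X₂ be real Hausdorff locally convex topological vector spaces, let Ω₁ ⊆ X₁ and Ω₂ ⊆ X₂ be nonempty compact convex sets, and let f : X₁ × X₂ → ℝ be a continuous function such that f(·, y) is concave on X₁ for every fixed y ∈ Ω₂ and f(x, ·) is convex on X₂ for every fixed x ∈ Ω₁. Then the minimax equality max over x ∈ Ω₁ of (min over y ∈ Ω₂ of f(x, y)) = min over y ∈ Ω₂ of (max over x ∈ Ω₁ of f(x, y)) holds, where all the indicated maxima and minima are attained. -/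
/-! Sion's minimax theorem provides a saddle point `(a, b) ∈ Ω₁ × Ω₂`, i.e.
`f (x, b) ≤ f (a, b) ≤ f (a, y)` for all `x ∈ Ω₁`, `y ∈ Ω₂`. Its value `f (a, b)` is then
both the max-min and the min-max. -/

open Set

theorem IsCompact.exists_isLeast_image {X α : Type*} [TopologicalSpace X] [LinearOrder α]
    [TopologicalSpace α] [ClosedIicTopology α] {s : Set X} {g : X → α} (hs : IsCompact s)
    (hne : s.Nonempty) (hg : Continuous g) : ∃ x ∈ s, IsLeast (g '' s) (g x) := by
  obtain ⟨_, hleast⟩ := (hs.image hg).exists_isLeast (hne.image g)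
  obtain ⟨x, hx, rfl⟩ := hleast.1
  exact ⟨x, hx, hleast⟩

theorem IsCompact.exists_isGreatest_image {X α : Type*} [TopologicalSpace X] [LinearOrder α]
    [TopologicalSpace α] [ClosedIciTopology α] {s : Set X} {g : X → α} (hs : IsCompact s)
    (hne : s.Nonempty) (hg : Continuous g) : ∃ x ∈ s, IsGreatest (g '' s) (g x) := by
  obtain ⟨_, hgreatest⟩ := (hs.image hg).exists_isGreatest (hne.image g)
  obtain ⟨x, hx, rfl⟩ := hgreatest.1
  exact ⟨x, hx, hgreatest⟩

namespace IsSaddlePointOn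

variable {E F β : Type*} [ConditionallyCompleteLinearOrder β] {X : Set E} {Y : Set F}
  {f : E → F → β} {a : E} {b : F}

theorem isLeast_csSup (h : IsSaddlePointOn X Y f a b) (ha : a ∈ X) (hb : b ∈ Y)
    (hbdd : ∀ x ∈ X, BddAbove (f x '' Y)) :
    IsLeast ((fun x => sSup (f x '' Y)) '' X) (f a b) := by
  have hmax : IsGreatest (f a '' Y) (f a b) :=
    ⟨mem_image_of_mem _ hb, forall_mem_image.2 fun y hy => h a ha y hy⟩
  refine ⟨⟨a, ha, hmax.csSup_eq⟩, forall_mem_image.2 fun x hx => ?_⟩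
  exact le_csSup_of_le (hbdd x hx) (mem_image_of_mem _ hb) (h x hx b hb)

theorem isGreatest_csInf (h : IsSaddlePointOn X Y f a b) (ha : a ∈ X) (hb : b ∈ Y)
    (hbdd : ∀ y ∈ Y, BddBelow ((f · y) '' X)) :
    IsGreatest ((fun y => sInf ((f · y) '' X)) '' Y) (f a b) := by
  have hmin : IsLeast ((f · b) '' X) (f a b) :=
    ⟨mem_image_of_mem _ ha, forall_mem_image.2 fun x hx => h x hx b hb⟩
  refine ⟨⟨b, hb, hmin.csInf_eq⟩, forall_mem_image.2 fun y hy => ?_⟩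
  exact csInf_le_of_le (hbdd y hy) (mem_image_of_mem _ ha) (h a ha y hy)

end IsSaddlePointOn

theorem minimax_concave_convex_lctv_general
    {X₁ X₂ : Type*}
    [AddCommGroup X₁] [Module ℝ X₁] [TopologicalSpace X₁] [IsTopologicalAddGroup X₁]
    [ContinuousSMul ℝ X₁]
    [AddCommGroup X₂] [Module ℝ X₂] [TopologicalSpace X₂] [IsTopologicalAddGroup X₂]
    [ContinuousSMul ℝ X₂]
    (Ω₁ : Set X₁) (Ω₂ : Set X₂)
    (hne₁ : Ω₁.Nonempty) (hcp₁ : IsCompact Ω₁) (hcv₁ : Convex ℝ Ω₁)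
    (hne₂ : Ω₂.Nonempty) (hcp₂ : IsCompact Ω₂) (hcv₂ : Convex ℝ Ω₂)
    (f : X₁ × X₂ → ℝ) (hf : Continuous f)
    (hconc : ∀ y ∈ Ω₂, ConcaveOn ℝ Set.univ (fun x => f (x, y)))
    (hconv : ∀ x ∈ Ω₁, ConvexOn ℝ Set.univ (fun y => f (x, y))) :
    -- the inner minima and maxima are attained
    (∀ x ∈ Ω₁, ∃ y ∈ Ω₂, IsLeast ((fun y => f (x, y)) '' Ω₂) (f (x, y))) ∧
    (∀ y ∈ Ω₂, ∃ x ∈ Ω₁, IsGreatest ((fun x => f (x, y)) '' Ω₁) (f (x, y))) ∧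
    -- the outer max and min are attained and equal
    ∃ c : ℝ,
      IsGreatest ((fun x => sInf ((fun y => f (x, y)) '' Ω₂)) '' Ω₁) c ∧
      IsLeast ((fun y => sSup ((fun x => f (x, y)) '' Ω₁)) '' Ω₂) c := by
  -- Sion's theorem is stated for the function `y ↦ x ↦ f (x, y)`, minimised in its first argument.
  obtain ⟨b, hb, a, ha, hsaddle⟩ := Sion.exists_isSaddlePointOn (f := fun y x => f (x, y))
    hne₂ hcv₂ hcp₂ (fun x _ => hf.curry_right.lowerSemicontinuous.lowerSemicontinuousOn _)
    (fun x hx => ((hconv x hx).subset (subset_univ _) hcv₂).quasiconvexOn) hcv₁ hne₁ hcp₁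
    (fun y _ => hf.curry_left.upperSemicontinuous.upperSemicontinuousOn _)
    (fun y hy => ((hconc y hy).subset (subset_univ _) hcv₁).quasiconcaveOn)
  refine ⟨fun x _ => hcp₂.exists_isLeast_image hne₂ hf.curry_right,
    fun y _ => hcp₁.exists_isGreatest_image hne₁ hf.curry_left, f (a, b),
    hsaddle.isGreatest_csInf hb ha fun x _ => (hcp₂.image hf.curry_right).bddBelow,
    hsaddle.isLeast_csSup hb ha fun y _ => (hcp₁.image hf.curry_left).bddAbove⟩

/-- Minimax equality for continuous concave-convex functions on nonempty compact convex
subsets of locally convex topological vector spaces: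
`max_{x ∈ Ω₁} min_{y ∈ Ω₂} f(x,y) = min_{y ∈ Ω₂} max_{x ∈ Ω₁} f(x,y)`, with all the
indicated maxima and minima attained. -/
theorem minimax_concave_convex_lctv
    {X₁ X₂ : Type*}
    [AddCommGroup X₁] [Module ℝ X₁] [TopologicalSpace X₁] [IsTopologicalAddGroup X₁]
    [ContinuousSMul ℝ X₁] [LocallyConvexSpace ℝ X₁] [T2Space X₁]
    [AddCommGroup X₂] [Module ℝ X₂] [TopologicalSpace X₂] [IsTopologicalAddGroup X₂]
    [ContinuousSMul ℝ X₂] [LocallyConvexSpace ℝ X₂] [T2Space X₂]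
    (Ω₁ : Set X₁) (Ω₂ : Set X₂)
    (hne₁ : Ω₁.Nonempty) (hcp₁ : IsCompact Ω₁) (hcv₁ : Convex ℝ Ω₁)
    (hne₂ : Ω₂.Nonempty) (hcp₂ : IsCompact Ω₂) (hcv₂ : Convex ℝ Ω₂)
    (f : X₁ × X₂ → ℝ) (hf : Continuous f)
    (hconc : ∀ y ∈ Ω₂, ConcaveOn ℝ Set.univ (fun x => f (x, y)))
    (hconv : ∀ x ∈ Ω₁, ConvexOn ℝ Set.univ (fun y => f (x, y))) :
    -- the inner minima and maxima are attained
    (∀ x ∈ Ω₁, ∃ y ∈ Ω₂, IsLeast ((fun y => f (x, y)) '' Ω₂) (f (x, y))) ∧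
    (∀ y ∈ Ω₂, ∃ x ∈ Ω₁, IsGreatest ((fun x => f (x, y)) '' Ω₁) (f (x, y))) ∧
    -- the outer max and min are attained and equal
    ∃ c : ℝ,
      IsGreatest ((fun x => sInf ((fun y => f (x, y)) '' Ω₂)) '' Ω₁) c ∧
      IsLeast ((fun y => sSup ((fun x => f (x, y)) '' Ω₁)) '' Ω₂) c :=
  minimax_concave_convex_lctv_general Ω₁ Ω₂ hne₁ hcp₁ hcv₁ hne₂ hcp₂ hcv₂ f hf hconc hconv
end

section
/- Let X₁ and X₂ be real Hausdorff locally convex topological vector spaces, and let Ω₁ ⊆ X₁ and Ω₂ ⊆ X₂ be nonempty compact convex sets. Let f : Ω₁ × Ω₂ → ℝ be a function such that f(·, y) is concave and upper semicontinuous on Ω₁ for every fixed y ∈ Ω₂, and f(x, ·) is convex on Ω₂ for every fixed x ∈ Ω₁. Then max over x ∈ Ω₁ of (inf over y ∈ Ω₂ of f(x, y)) = inf over y ∈ Ω₂ of (max over x ∈ Ω₁ of f(x, y)), where the two indicated maxima over the compact set Ω₁ are attained (the infima over Ω₂ need not be attained, and the common value may be −∞, so the equality is understood in the extended real numbers). 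-/
/-!
If the inf-max equality failed, some real `α` would lie strictly between the two sides, so every
`x ∈ Ω₁` would have a `y ∈ Ω₂` with `f x y < α`. Upper semicontinuity and compactness reduce
this to finitely many `y₁, …, yₙ`. Separating the convex set `{z ∈ ℝⁿ | ∃ x ∈ Ω₁, z ≤ (f x yᵢ)ᵢ}`
(convex by concavity in `x`) from the open orthant `(α, ∞)ⁿ` produces weights `wᵢ` with
`∑ wᵢ f x yᵢ ≤ α` on `Ω₁`; by convexity in `y` the point `∑ wᵢ yᵢ ∈ Ω₂` then has
`sup_x f x (∑ wᵢ yᵢ) ≤ α`, a contradiction. The maxima exist because an infimum of upper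
semicontinuous functions is upper semicontinuous, and such functions attain their maximum on
compact sets.
-/

open Set

theorem IsCompact.exists_finset_forall_exists_lt {X ι β : Type*} [TopologicalSpace X]
    [Preorder β] {s : Set X} (hs : IsCompact s) {g : ι → X → β}
    (hg : ∀ i, UpperSemicontinuousOn (g i) s) {b : β} (h : ∀ x ∈ s, ∃ i, g i x < b) :
    ∃ t : Finset ι, ∀ x ∈ s, ∃ i ∈ t, g i x < b := by
  classical
  choose i hi using h
  obtain ⟨t, hst⟩ := hs.elim_nhdsWithin_subcover' (fun x hx => {x' | g (i x hx) x' < b})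
    fun x hx => hg _ x hx b (hi x hx)
  refine ⟨t.image fun x : s => i x.1 x.2, fun x hx => ?_⟩
  obtain ⟨x', hx't, hx⟩ := mem_iUnion₂.mp (hst hx)
  exact ⟨_, Finset.mem_image_of_mem _ hx't, hx⟩

theorem LinearMap.map_nonpos_of_forall_add_smul_lt {E : Type*} [AddCommGroup E] [Module ℝ E]
    (φ : E →ₗ[ℝ] ℝ) {z v : E} {c : ℝ} (h : ∀ s : ℝ, 0 ≤ s → φ (z + s • v) < c) : φ v ≤ 0 := by
  by_contra! hv
  have h₀ : φ z < c := by simpa using h 0 le_rfl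
  have := h ((c - φ z) / φ v) (div_nonneg (by linarith) hv.le)
  rw [map_add, map_smul, smul_eq_mul, div_mul_cancel₀ _ hv.ne'] at this
  linarith

theorem exists_mem_stdSimplex_forall_sum_mul_le_of_disjoint {ι : Type*} [Fintype ι]
    {C : Set (ι → ℝ)} (hC : Convex ℝ C) (hne : C.Nonempty) {α : ℝ}
    (h : Disjoint (univ.pi fun _ => Ioi α) C) :
    ∃ w ∈ stdSimplex ℝ ι, ∀ z ∈ C, ∑ i, w i * z i ≤ α := by
  classical
  obtain ⟨z₀, hz₀⟩ := hne
  obtain ⟨φ, c, hφU, hφC⟩ := geometric_hahn_banach_open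
    (convex_pi fun _ _ => convex_Ioi α) (isOpen_set_pi finite_univ fun _ _ => isOpen_Ioi) hC h
  set e : ι → ι → ℝ := fun i j => if i = j then 1 else 0
  set a : ι → ℝ := fun i => -φ (e i)
  have hφ : ∀ z, φ z = -∑ i, a i * z i := fun z => by
    simp only [a, neg_mul, Finset.sum_neg_distrib, neg_neg, mul_comm (φ _)]
    exact φ.toLinearMap.pi_apply_eq_sum_univ z
  have hlt : ∀ t, α < t → -((∑ i, a i) * t) < c := fun t ht => by
    simpa [hφ, Finset.sum_mul] using hφU (fun _ => t) fun _ _ => ht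
  have hle : ∀ z ∈ C, c ≤ -∑ i, a i * z i := fun z hz => hφ z ▸ hφC z hz
  have ha : ∀ i, 0 ≤ a i := fun i => neg_nonneg.mpr <|
    φ.toLinearMap.map_nonpos_of_forall_add_smul_lt (z := fun _ => α + 1) fun s hs =>
      hφU _ fun j _ => by
        have : 0 ≤ s * e i j := mul_nonneg hs (by positivity)
        simp only [Pi.add_apply, Pi.smul_apply, smul_eq_mul, mem_Ioi]
        linarith
  have hS : 0 < ∑ i, a i := by
    refine (Finset.sum_nonneg fun i _ => ha i).lt_of_ne fun hzero => ?_
    have hall : ∀ i, a i = 0 := fun i =>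
      (Finset.sum_eq_zero_iff_of_nonneg fun i _ => ha i).mp hzero.symm i (Finset.mem_univ i)
    have h₁ := hlt (α + 1) (by linarith)
    have h₂ := hle z₀ hz₀
    simp only [hall, zero_mul, Finset.sum_const_zero, neg_zero] at h₁ h₂
    linarith
  refine ⟨fun i => a i / ∑ j, a j, ⟨fun i => div_nonneg (ha i) hS.le, ?_⟩, fun z hz => ?_⟩
  · rw [← Finset.sum_div, div_self hS.ne']
  · refine le_of_forall_gt_imp_ge_of_dense fun t ht => ?_
    have := (hlt t ht).trans_le (hle z hz)
    simp_rw [div_mul_eq_mul_div, ← Finset.sum_div]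
    rw [div_le_iff₀ hS]
    linarith

theorem Convex.exists_mem_stdSimplex_forall_sum_mul_le {E ι : Type*} [Fintype ι]
    [AddCommGroup E] [Module ℝ E] {K : Set E} (hK : Convex ℝ K) (hne : K.Nonempty)
    {g : ι → E → ℝ} (hg : ∀ i, ConcaveOn ℝ K (g i)) {α : ℝ} (h : ∀ x ∈ K, ∃ i, g i x < α) :
    ∃ w ∈ stdSimplex ℝ ι, ∀ x ∈ K, ∑ i, w i * g i x ≤ α := by
  set C : Set (ι → ℝ) := {z | ∃ x ∈ K, ∀ i, z i ≤ g i x}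
  have hC : Convex ℝ C := by
    rintro z ⟨x, hx, hz⟩ z' ⟨x', hx', hz'⟩ a b ha hb hab
    refine ⟨a • x + b • x', hK hx hx' ha hb hab, fun i => ?_⟩
    calc a * z i + b * z' i ≤ a * g i x + b * g i x' := by gcongr; exacts [hz i, hz' i]
      _ ≤ g i (a • x + b • x') := (hg i).2 hx hx' ha hb hab
  have hdisj : Disjoint (univ.pi fun _ => Ioi α) C := by
    refine disjoint_left.mpr fun z hz ⟨x, hx, hzx⟩ => ?_
    obtain ⟨i, hi⟩ := h x hx
    exact (hz i (mem_univ i)).not_ge ((hzx i).trans hi.le)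
  obtain ⟨x₀, hx₀⟩ := hne
  obtain ⟨w, hw, hwC⟩ := exists_mem_stdSimplex_forall_sum_mul_le_of_disjoint hC
    ⟨fun i => g i x₀, x₀, hx₀, fun i => le_rfl⟩ hdisj
  exact ⟨w, hw, fun x hx => hwC _ ⟨x, hx, fun i => le_rfl⟩⟩

theorem exists_forall_le_of_forall_exists_lt {E F : Type*} [AddCommGroup E] [Module ℝ E]
    [TopologicalSpace E] [AddCommGroup F] [Module ℝ F] {X : Set E} {Y : Set F}
    (hne : X.Nonempty) (hX : IsCompact X) (hXc : Convex ℝ X) (hYc : Convex ℝ Y) {f : E → F → ℝ}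
    (hconc : ∀ y ∈ Y, ConcaveOn ℝ X fun x => f x y)
    (husc : ∀ y ∈ Y, UpperSemicontinuousOn (fun x => f x y) X)
    (hconv : ∀ x ∈ X, ConvexOn ℝ Y fun y => f x y) {α : ℝ} (h : ∀ x ∈ X, ∃ y ∈ Y, f x y < α) :
    ∃ y ∈ Y, ∀ x ∈ X, f x y ≤ α := by
  obtain ⟨t, ht⟩ := hX.exists_finset_forall_exists_lt (g := fun (y : Y) x => f x y)
    (fun y => husc y y.2) fun x hx => by
      obtain ⟨y, hy, hlt⟩ := h x hx
      exact ⟨⟨y, hy⟩, hlt⟩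
  obtain ⟨w, hw, hwα⟩ := hXc.exists_mem_stdSimplex_forall_sum_mul_le hne
    (g := fun (i : t) x => f x i) (fun i => hconc _ i.1.2) fun x hx => by
      obtain ⟨y, hy, hlt⟩ := ht x hx
      exact ⟨⟨y, hy⟩, hlt⟩
  refine ⟨∑ i, w i • (i : F), hYc.sum_mem (fun i _ => hw.1 i) hw.2 fun i _ => i.1.2,
    fun x hx => ?_⟩
  calc f x (∑ i, w i • (i : F))
      ≤ ∑ i, w i • f x i := (hconv x hx).map_sum_le (fun i _ => hw.1 i) hw.2 fun i _ => i.1.2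
    _ ≤ α := hwα x hx

theorem infmax_equality_usc_general
    {X₁ X₂ : Type*}
    [AddCommGroup X₁] [Module ℝ X₁] [TopologicalSpace X₁]
    [AddCommGroup X₂] [Module ℝ X₂]
    (Ω₁ : Set X₁) (Ω₂ : Set X₂)
    (hne₁ : Ω₁.Nonempty) (hcp₁ : IsCompact Ω₁) (hcv₁ : Convex ℝ Ω₁)
    (hcv₂ : Convex ℝ Ω₂)
    (f : X₁ → X₂ → ℝ)
    (hconc : ∀ y ∈ Ω₂, ConcaveOn ℝ Ω₁ (fun x => f x y))
    (husc : ∀ y ∈ Ω₂, UpperSemicontinuousOn (fun x => f x y) Ω₁)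
    (hconv : ∀ x ∈ Ω₁, ConvexOn ℝ Ω₂ (fun y => f x y)) :
    -- the inner maxima over the compact set Ω₁ are attained
    (∀ y ∈ Ω₂, ∃ x ∈ Ω₁, ∀ x' ∈ Ω₁, f x' y ≤ f x y) ∧
    -- the outer max over Ω₁ is attained and the inf-max equality holds in EReal
    ∃ xbar ∈ Ω₁,
      (∀ x ∈ Ω₁, (⨅ y : Ω₂, (f x y : EReal)) ≤ ⨅ y : Ω₂, (f xbar y : EReal)) ∧
      (⨅ y : Ω₂, (f xbar y : EReal)) = ⨅ y : Ω₂, ⨆ x : Ω₁, (f x y : EReal) := by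
  refine ⟨fun y hy => (husc y hy).exists_isMaxOn hne₁ hcp₁, ?_⟩
  have hinf : UpperSemicontinuousOn (fun x => ⨅ y : Ω₂, (f x y : EReal)) Ω₁ :=
    upperSemicontinuousOn_iInf fun y => continuous_coe_real_ereal.comp_upperSemicontinuousOn
      (husc y y.2) EReal.coe_strictMono.monotone
  obtain ⟨xbar, hxbar, hmax⟩ := hinf.exists_isMaxOn hne₁ hcp₁
  have hweak : ∀ x ∈ Ω₁, (⨅ y : Ω₂, (f x y : EReal)) ≤ ⨅ y : Ω₂, ⨆ x : Ω₁, (f x y : EReal) :=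
    fun x hx => iInf_mono fun y => le_iSup (fun x' : Ω₁ => (f x' y : EReal)) ⟨x, hx⟩
  refine ⟨xbar, hxbar, hmax, (hweak xbar hxbar).antisymm ?_⟩
  by_contra! hlt
  obtain ⟨α, hα₁, hα₂⟩ := EReal.exists_between_coe_real hlt
  obtain ⟨y, hy, hyα⟩ := exists_forall_le_of_forall_exists_lt hne₁ hcp₁ hcv₁ hcv₂ hconc husc
    hconv fun x hx => by
      obtain ⟨y, hy⟩ := iInf_lt_iff.mp ((hmax hx).trans_lt hα₁)
      exact ⟨y, y.2, EReal.coe_lt_coe_iff.mp hy⟩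
  exact hα₂.not_ge <| (iInf_le _ ⟨y, hy⟩).trans <|
    iSup_le fun x => EReal.coe_le_coe_iff.mpr (hyα x x.2)

/-- Inf-max relationship under upper semicontinuity: if `f(·, y)` is concave and upper
semicontinuous on the nonempty compact convex set `Ω₁` for each `y ∈ Ω₂` and `f(x, ·)`
is convex on the nonempty compact convex set `Ω₂` for each `x ∈ Ω₁`, then
`max_{x ∈ Ω₁} inf_{y ∈ Ω₂} f(x,y) = inf_{y ∈ Ω₂} max_{x ∈ Ω₁} f(x,y)`, where the maxima
over `Ω₁` are attained and the equality is understood in the extended reals (the common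
value may be `-∞`, as the infima over `Ω₂` need not be attained). -/
theorem infmax_equality_usc
    {X₁ X₂ : Type*}
    [AddCommGroup X₁] [Module ℝ X₁] [TopologicalSpace X₁] [IsTopologicalAddGroup X₁]
    [ContinuousSMul ℝ X₁] [LocallyConvexSpace ℝ X₁] [T2Space X₁]
    [AddCommGroup X₂] [Module ℝ X₂] [TopologicalSpace X₂] [IsTopologicalAddGroup X₂]
    [ContinuousSMul ℝ X₂] [LocallyConvexSpace ℝ X₂] [T2Space X₂]
    (Ω₁ : Set X₁) (Ω₂ : Set X₂)
    (hne₁ : Ω₁.Nonempty) (hcp₁ : IsCompact Ω₁) (hcv₁ : Convex ℝ Ω₁)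
    (hne₂ : Ω₂.Nonempty) (hcp₂ : IsCompact Ω₂) (hcv₂ : Convex ℝ Ω₂)
    (f : X₁ → X₂ → ℝ)
    (hconc : ∀ y ∈ Ω₂, ConcaveOn ℝ Ω₁ (fun x => f x y))
    (husc : ∀ y ∈ Ω₂, UpperSemicontinuousOn (fun x => f x y) Ω₁)
    (hconv : ∀ x ∈ Ω₁, ConvexOn ℝ Ω₂ (fun y => f x y)) :
    -- the inner maxima over the compact set Ω₁ are attained
    (∀ y ∈ Ω₂, ∃ x ∈ Ω₁, ∀ x' ∈ Ω₁, f x' y ≤ f x y) ∧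
    -- the outer max over Ω₁ is attained and the inf-max equality holds in EReal
    ∃ xbar ∈ Ω₁,
      (∀ x ∈ Ω₁, (⨅ y : Ω₂, (f x y : EReal)) ≤ ⨅ y : Ω₂, (f xbar y : EReal)) ∧
      (⨅ y : Ω₂, (f xbar y : EReal)) = ⨅ y : Ω₂, ⨆ x : Ω₁, (f x y : EReal) :=
  infmax_equality_usc_general Ω₁ Ω₂ hne₁ hcp₁ hcv₁ hcv₂ f hconc husc hconv
end

section
/- Let X₁ and X₂ be real Hausdorff locally convex topological vector spaces, and let Ω₁ ⊆ X₁ and Ω₂ ⊆ X₂ be nonempty compact convex sets. Let f : Ω₁ × Ω₂ → ℝ be a function such that f(·, y) is concave and upper semicontinuous on Ω₁ for every fixed y ∈ Ω₂, and f(x, ·) is convex and lower semicontinuous on Ω₂ for every fixed x ∈ Ω₁. Then the minimax equality max over x ∈ Ω₁ of (min over y ∈ Ω₂ of f(x, y)) = min over y ∈ Ω₂ of (max over x ∈ Ω₁ of f(x, y)) holds with all maxima and minima attained, and moreover f admits a saddle point: there exists (x̄, ȳ) ∈ Ω₁ × Ω₂ such that f(x, ȳ) ≤ f(x̄, ȳ)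 ≤ f(x̄, y) for all x ∈ Ω₁ and y ∈ Ω₂. -/
/-! Concave and convex functions are quasiconcave and quasiconvex, so Sion's minimax theorem
yields a saddle point `(x̄, ȳ)`; its value `f x̄ ȳ` is then both the largest of the inner minima
and the smallest of the inner maxima, and semicontinuity on compact sets gives the inner extrema. -/

open Set

lemma IsMinOn.isLeast_image {α β : Type*} [Preorder β] {f : α → β} {s : Set α} {a : α}
    (ha : a ∈ s) (h : IsMinOn f s a) : IsLeast (f '' s) (f a) :=
  ⟨mem_image_of_mem f ha, forall_mem_image.2 fun _ hx => isMinOn_iff.1 h _ hx⟩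

lemma IsMaxOn.isGreatest_image {α β : Type*} [Preorder β] {f : α → β} {s : Set α} {a : α}
    (ha : a ∈ s) (h : IsMaxOn f s a) : IsGreatest (f '' s) (f a) :=
  IsMinOn.isLeast_image (β := βᵒᵈ) ha h

section SaddlePoint

variable {E F β : Type*} [ConditionallyCompleteLattice β] {X : Set E} {Y : Set F}
  {f : E → F → β} {a : E} {b : F}

lemma IsSaddlePointOn.isLeast_sSup_image (h : IsSaddlePointOn X Y f a b) (ha : a ∈ X)
    (hb : b ∈ Y) (hbdd : ∀ x ∈ X, BddAbove (f x '' Y)) :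
    IsLeast ((fun x => sSup (f x '' Y)) '' X) (f a b) := by
  have hmax : IsGreatest (f a '' Y) (f a b) :=
    ⟨mem_image_of_mem _ hb, forall_mem_image.2 fun y hy => h a ha y hy⟩
  refine ⟨⟨a, ha, hmax.csSup_eq⟩, forall_mem_image.2 fun x hx => ?_⟩
  exact (h x hx b hb).trans (le_csSup (hbdd x hx) (mem_image_of_mem _ hb))

lemma IsSaddlePointOn.isGreatest_sInf_image (h : IsSaddlePointOn X Y f a b) (ha : a ∈ X)
    (hb : b ∈ Y) (hbdd : ∀ y ∈ Y, BddBelow ((fun x => f x y) '' X)) :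
    IsGreatest ((fun y => sInf ((fun x => f x y) '' X)) '' Y) (f a b) :=
  IsSaddlePointOn.isLeast_sSup_image (β := βᵒᵈ) (f := fun y x => OrderDual.toDual (f x y))
    (fun y hy x hx => h x hx y hy) hb ha hbdd

end SaddlePoint

theorem minimax_equality_and_saddle_point_general
    {X₁ X₂ : Type*}
    [AddCommGroup X₁] [Module ℝ X₁] [TopologicalSpace X₁] [IsTopologicalAddGroup X₁]
    [ContinuousSMul ℝ X₁]
    [AddCommGroup X₂] [Module ℝ X₂] [TopologicalSpace X₂] [IsTopologicalAddGroup X₂]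
    [ContinuousSMul ℝ X₂]
    (Ω₁ : Set X₁) (Ω₂ : Set X₂)
    (hne₁ : Ω₁.Nonempty) (hcp₁ : IsCompact Ω₁) (hcv₁ : Convex ℝ Ω₁)
    (hne₂ : Ω₂.Nonempty) (hcp₂ : IsCompact Ω₂) (hcv₂ : Convex ℝ Ω₂)
    (f : X₁ → X₂ → ℝ)
    (hconc : ∀ y ∈ Ω₂, ConcaveOn ℝ Ω₁ (fun x => f x y))
    (husc : ∀ y ∈ Ω₂, UpperSemicontinuousOn (fun x => f x y) Ω₁)
    (hconv : ∀ x ∈ Ω₁, ConvexOn ℝ Ω₂ (fun y => f x y))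
    (hlsc : ∀ x ∈ Ω₁, LowerSemicontinuousOn (fun y => f x y) Ω₂) :
    -- the inner minima and maxima are attained
    (∀ x ∈ Ω₁, ∃ y ∈ Ω₂, IsLeast ((fun y => f x y) '' Ω₂) (f x y)) ∧
    (∀ y ∈ Ω₂, ∃ x ∈ Ω₁, IsGreatest ((fun x => f x y) '' Ω₁) (f x y)) ∧
    -- the outer max and min are attained and equal
    (∃ c : ℝ,
      IsGreatest ((fun x => sInf ((fun y => f x y) '' Ω₂)) '' Ω₁) c ∧
      IsLeast ((fun y => sSup ((fun x => f x y) '' Ω₁)) '' Ω₂) c) ∧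
    -- existence of a saddle point
    ∃ xbar ∈ Ω₁, ∃ ybar ∈ Ω₂,
      (∀ x ∈ Ω₁, f x ybar ≤ f xbar ybar) ∧ (∀ y ∈ Ω₂, f xbar ybar ≤ f xbar y) := by
  have hmin : ∀ x ∈ Ω₁, ∃ y ∈ Ω₂, IsLeast ((fun y => f x y) '' Ω₂) (f x y) := fun x hx =>
    let ⟨y, hy, hy_min⟩ := (hlsc x hx).exists_isMinOn hne₂ hcp₂
    ⟨y, hy, hy_min.isLeast_image hy⟩
  have hmax : ∀ y ∈ Ω₂, ∃ x ∈ Ω₁, IsGreatest ((fun x => f x y) '' Ω₁) (f x y) := fun y hy =>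
    let ⟨x, hx, hx_max⟩ := (husc y hy).exists_isMaxOn hne₁ hcp₁
    ⟨x, hx, hx_max.isGreatest_image hx⟩
  -- Mathlib's saddle points minimize in the first variable, hence the swapped arguments.
  obtain ⟨ybar, hybar, xbar, hxbar, hsaddle⟩ :=
    Sion.exists_isSaddlePointOn (f := fun y x => f x y) hne₂ hcv₂ hcp₂
      (fun x hx => hlsc x hx) (fun x hx => (hconv x hx).quasiconvexOn) hcv₁ hne₁ hcp₁
      (fun y hy => husc y hy) (fun y hy => (hconc y hy).quasiconcaveOn)
  refine ⟨hmin, hmax, ⟨f xbar ybar, ?_, ?_⟩, xbar, hxbar, ybar, hybar,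
    fun x hx => hsaddle ybar hybar x hx, fun y hy => hsaddle y hy xbar hxbar⟩
  · exact hsaddle.isGreatest_sInf_image hybar hxbar fun x hx =>
      let ⟨_, _, hleast⟩ := hmin x hx; hleast.bddBelow
  · exact hsaddle.isLeast_sSup_image hybar hxbar fun y hy =>
      let ⟨_, _, hgreatest⟩ := hmax y hy; hgreatest.bddAbove

/-- Minimax equality without continuity: if `f(·, y)` is concave and upper
semicontinuous on the nonempty compact convex set `Ω₁` for each `y ∈ Ω₂` and `f(x, ·)`
is convex and lower semicontinuous on the nonempty compact convex set `Ω₂` for each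
`x ∈ Ω₁`, then `max_{x ∈ Ω₁} min_{y ∈ Ω₂} f(x,y) = min_{y ∈ Ω₂} max_{x ∈ Ω₁} f(x,y)`
with all maxima and minima attained, and `f` admits a saddle point on `Ω₁ × Ω₂`. -/
theorem minimax_equality_and_saddle_point
    {X₁ X₂ : Type*}
    [AddCommGroup X₁] [Module ℝ X₁] [TopologicalSpace X₁] [IsTopologicalAddGroup X₁]
    [ContinuousSMul ℝ X₁] [LocallyConvexSpace ℝ X₁] [T2Space X₁]
    [AddCommGroup X₂] [Module ℝ X₂] [TopologicalSpace X₂] [IsTopologicalAddGroup X₂]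
    [ContinuousSMul ℝ X₂] [LocallyConvexSpace ℝ X₂] [T2Space X₂]
    (Ω₁ : Set X₁) (Ω₂ : Set X₂)
    (hne₁ : Ω₁.Nonempty) (hcp₁ : IsCompact Ω₁) (hcv₁ : Convex ℝ Ω₁)
    (hne₂ : Ω₂.Nonempty) (hcp₂ : IsCompact Ω₂) (hcv₂ : Convex ℝ Ω₂)
    (f : X₁ → X₂ → ℝ)
    (hconc : ∀ y ∈ Ω₂, ConcaveOn ℝ Ω₁ (fun x => f x y))
    (husc : ∀ y ∈ Ω₂, UpperSemicontinuousOn (fun x => f x y) Ω₁)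
    (hconv : ∀ x ∈ Ω₁, ConvexOn ℝ Ω₂ (fun y => f x y))
    (hlsc : ∀ x ∈ Ω₁, LowerSemicontinuousOn (fun y => f x y) Ω₂) :
    -- the inner minima and maxima are attained
    (∀ x ∈ Ω₁, ∃ y ∈ Ω₂, IsLeast ((fun y => f x y) '' Ω₂) (f x y)) ∧
    (∀ y ∈ Ω₂, ∃ x ∈ Ω₁, IsGreatest ((fun x => f x y) '' Ω₁) (f x y)) ∧
    -- the outer max and min are attained and equal
    (∃ c : ℝ,
      IsGreatest ((fun x => sInf ((fun y => f x y) '' Ω₂)) '' Ω₁) c ∧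
      IsLeast ((fun y => sSup ((fun x => f x y) '' Ω₁)) '' Ω₂) c) ∧
    -- existence of a saddle point
    ∃ xbar ∈ Ω₁, ∃ ybar ∈ Ω₂,
      (∀ x ∈ Ω₁, f x ybar ≤ f xbar ybar) ∧ (∀ y ∈ Ω₂, f xbar ybar ≤ f xbar y) :=
  minimax_equality_and_saddle_point_general Ω₁ Ω₂ hne₁ hcp₁ hcv₁ hne₂ hcp₂ hcv₂ f hconc husc hconv
    hlsc
end

section
/- Let X be a real vector space, let Ω₁ ⊆ X be a nonempty convex set, let n ≥ 1, and let φ₁, …, φₙ : X → ℝ be functions each of which is concave on Ω₁. Suppose that for every x ∈ Ω₁ there exists an index j ∈ {1, …, n} with φⱼ(x) < 0. Then there exist β₁, …, βₙ ≥ 0 with β₁ + ⋯ + βₙ = 1 such that Σⱼ₌₁ⁿ βⱼ φⱼ(x) ≤ 0 for all x ∈ Ω₁. -/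
/-- A separation-based lemma: if `φ₁, …, φₙ` are concave on a nonempty convex set
`Ω₁ ⊆ X` and for every `x ∈ Ω₁` some `φⱼ(x)` is negative, then there is a vector
`β` in the standard simplex with `Σⱼ βⱼ φⱼ(x) ≤ 0` for all `x ∈ Ω₁`. -/
theorem simplex_combination_nonpositive
    {X : Type*} [AddCommGroup X] [Module ℝ X]
    (Ω₁ : Set X) (hne : Ω₁.Nonempty) (hcv : Convex ℝ Ω₁)
    (n : ℕ) (hn : 1 ≤ n) (φ : Fin n → X → ℝ)
    (hconc : ∀ j : Fin n, ConcaveOn ℝ Ω₁ (φ j))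
    (hneg : ∀ x ∈ Ω₁, ∃ j : Fin n, φ j x < 0) :
    ∃ β : Fin n → ℝ, (∀ j, 0 ≤ β j) ∧ (∑ j, β j = 1) ∧
      ∀ x ∈ Ω₁, ∑ j, β j * φ j x ≤ 0 := by
  classical
  -- the "downward closure" of the image of `Ω₁` under `x ↦ (φ₁ x, …, φₙ x)`
  set S : Set (Fin n → ℝ) := {y | ∃ x ∈ Ω₁, ∀ j, y j ≤ φ j x} with hSdef
  -- the open positive orthant
  set P : Set (Fin n → ℝ) := {y | ∀ j, 0 < y j} with hPdef
  have hPeq : P = ⋂ j, (LinearMap.proj j : (Fin n → ℝ) →ₗ[ℝ] ℝ) ⁻¹' Set.Ioi 0 := by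
    ext y; simp [hPdef]
  have hPopen : IsOpen P := by
    rw [hPeq]
    exact isOpen_iInter_of_finite fun j => (isOpen_Ioi).preimage (continuous_apply j)
  have hPconv : Convex ℝ P := by
    rw [hPeq]
    exact convex_iInter fun j => (convex_Ioi (0:ℝ)).linear_preimage _
  have hSconv : Convex ℝ S := by
    rintro y ⟨x, hx, hy⟩ z ⟨x', hx', hz⟩ a b ha hb hab
    refine ⟨a • x + b • x', hcv hx hx' ha hb hab, fun j => ?_⟩
    have hc := (hconc j).2 hx hx' ha hb hab
    simp only [smul_eq_mul] at hc
    have h1 : a * y j ≤ a * φ j x := mul_le_mul_of_nonneg_left (hy j) ha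
    have h2 : b * z j ≤ b * φ j x' := mul_le_mul_of_nonneg_left (hz j) hb
    have : (a • y + b • z) j = a * y j + b * z j := rfl
    rw [this]
    linarith
  have hdis : Disjoint P S := by
    rw [Set.disjoint_left]
    rintro y hyP ⟨x, hx, hy⟩
    obtain ⟨j, hj⟩ := hneg x hx
    exact absurd (lt_of_lt_of_le (hyP j) (hy j)) (by linarith)
  obtain ⟨f, u, hfu, huf⟩ := geometric_hahn_banach_open hPconv hPopen hSconv hdis
  have h1P : (fun _ => (1:ℝ)) ∈ P := fun j => one_pos
  obtain ⟨x₀, hx₀⟩ := hne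
  have hΦS : ∀ x ∈ Ω₁, (fun j => φ j x) ∈ S := fun x hx => ⟨x, hx, fun j => le_refl _⟩
  -- 0 ≤ u
  have hu0 : 0 ≤ u := by
    by_contra h
    push_neg at h
    have hf1 : f (fun _ => (1:ℝ)) < u := hfu _ h1P
    have hf1neg : f (fun _ => (1:ℝ)) < 0 := lt_trans hf1 h
    have hf1ne : f (fun _ => (1:ℝ)) ≠ 0 := ne_of_lt hf1neg
    have hεpos : 0 < u / (2 * f (fun _ => (1:ℝ))) := div_pos_of_neg_of_neg h (by linarith)
    have hmem : ((u / (2 * f fun _ => (1:ℝ))) • fun _ => (1:ℝ)) ∈ P := fun j => by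
      simpa using hεpos
    have h2 := hfu _ hmem
    have hkey : u / (2 * f (fun _ => (1:ℝ))) * f (fun _ => (1:ℝ)) = u / 2 := by
      field_simp
    rw [map_smul, smul_eq_mul, hkey] at h2
    linarith
  -- f ≤ 0 on P
  have hfP : ∀ a ∈ P, f a ≤ 0 := by
    intro a ha
    by_contra h
    push_neg at h
    set t : ℝ := (u + 1) / f a with ht
    have htpos : 0 < t := div_pos (by linarith) h
    have hmem : (t • a) ∈ P := fun j => mul_pos htpos (ha j)
    have := hfu _ hmem
    rw [map_smul, smul_eq_mul, ht, div_mul_cancel₀ _ (ne_of_gt h)] at this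
    linarith
  have hf1 : f (fun _ => (1:ℝ)) ≤ 0 := hfP _ h1P
  -- f (Pi.single j 1) ≤ 0
  have he : ∀ j, f (Pi.single j (1:ℝ)) ≤ 0 := by
    intro j
    have key : ∀ ε : ℝ, 0 < ε → f (Pi.single j (1:ℝ)) ≤ ε * (-f (fun _ => (1:ℝ))) := by
      intro ε hε
      have hmem : ((Pi.single j (1:ℝ) : Fin n → ℝ) + ε • fun _ => (1:ℝ)) ∈ P := by
        intro i
        simp only [Pi.add_apply, Pi.smul_apply, smul_eq_mul, mul_one, Pi.single_apply]
        split <;> linarith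
      have := hfP _ hmem
      rw [map_add, map_smul, smul_eq_mul] at this
      linarith
    rcases eq_or_lt_of_le hf1 with h0 | hlt
    · linarith [key 1 one_pos]
    · refine le_of_forall_pos_le_add fun ε hε => ?_
      have := key (ε / (-f (fun _ => (1:ℝ)))) (div_pos hε (by linarith))
      rw [div_mul_cancel₀ _ (by linarith : -f (fun _ => (1:ℝ)) ≠ 0)] at this
      linarith
  -- representation of f
  have hrep : ∀ y : Fin n → ℝ, f y = ∑ j, y j * f (Pi.single j (1:ℝ)) := by
    intro y
    have hy : y = ∑ j, y j • (Pi.single j (1:ℝ) : Fin n → ℝ) := by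
      funext i
      simp [Finset.sum_apply, Pi.single_apply, mul_ite, Finset.sum_ite_eq]
    conv_lhs => rw [hy]
    rw [map_sum]
    simp [map_smul, smul_eq_mul]
  set c : Fin n → ℝ := fun j => -f (Pi.single j (1:ℝ)) with hc
  have hcnn : ∀ j, 0 ≤ c j := fun j => by simp [hc]; linarith [he j]
  set s : ℝ := ∑ j, c j with hs
  have hsnn : 0 ≤ s := Finset.sum_nonneg fun j _ => hcnn j
  have hspos : 0 < s := by
    rcases lt_or_eq_of_le hsnn with h | h
    · exact h
    · exfalso
      have hall : ∀ j ∈ Finset.univ, c j = 0 := by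
        rw [← Finset.sum_eq_zero_iff_of_nonneg (fun j _ => hcnn j)]
        exact h.symm
      have hzero : ∀ y : Fin n → ℝ, f y = 0 := by
        intro y
        rw [hrep]
        apply Finset.sum_eq_zero
        intro j hj
        have := hall j hj
        simp [hc] at this
        simp [this]
      linarith [hfu _ h1P, huf _ (hΦS x₀ hx₀), hzero (fun _ => (1:ℝ)), hzero (fun j => φ j x₀)]
  refine ⟨fun j => c j / s, fun j => div_nonneg (hcnn j) hsnn, ?_, ?_⟩
  · rw [← Finset.sum_div, ← hs, div_self (ne_of_gt hspos)]
  · intro x hx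
    have h2 : u ≤ f (fun j => φ j x) := huf _ (hΦS x hx)
    have hval : f (fun j => φ j x) = ∑ j, φ j x * f (Pi.single j (1:ℝ)) := hrep _
    have hsum : ∑ j, (c j / s) * φ j x = (-f (fun j => φ j x)) / s := by
      rw [hval, ← Finset.sum_neg_distrib, Finset.sum_div]
      apply Finset.sum_congr rfl
      intro j _
      simp [hc]
      ring
    rw [hsum]
    apply div_nonpos_of_nonpos_of_nonneg _ hsnn
    linarith
end
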